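/- Corollary 1 (pairwise form, no phase wrap-around): let M ≥ 2, N ≥ 1, and δφ ∈ ℝ with 0 < δφ ≤ π. Let φ_u, φ_v ∈ [0, π] with |φ_u − φ_v| ≥ δφ, assume (M − 1)·|cos φ_u − cos φ_v| ≤ 1, and define the single-path channels h_u, h_v : Fin M → ℂ by h_u m = exp(I·π·m·cos φ_u) and h_v m = exp(I·π·m·cos φ_v). Let x : Fin N → ℂ be a uniform-phase pilot sequence of length N with N ≥ 1/(4·(M − 1)·sin²(δφ/2)), and assume h_u m · x k and h_v m · x k are off-axis for all m ∈ Fin M, k ∈ Fin N. Then the quantized measurement matrices differ: there exist m ∈ Fin M and k ∈ Fin N with q(h_u m · x k) ≠ q(h_v m · x k). -/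
import Mathlib


/-- 1-bit quantization of a complex number: signs of the real and imaginary parts. -/
noncomputable def q (z : ℂ) : ℝ × ℝ := (Real.sign z.re, Real.sign z.im)

/-- A complex number is off-axis if both its real and imaginary parts are nonzero. -/
def offAxis (z : ℂ) : Prop := z.re ≠ 0 ∧ z.im ≠ 0

/-- A uniform-phase pilot sequence of length `N`: `x k = r k · exp(I·(k+1)·π/(2N))` with
positive magnitudes `r k`; its phases uniformly sample `(0, π/2]`. -/
def IsUniformPhasePilot (N : ℕ) (x : Fin N → ℂ) : Prop :=
  ∃ r : Fin N → ℝ, (∀ k, 0 < r k) ∧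
    ∀ k : Fin N, x k = (r k : ℂ) *
      Complex.exp (Complex.I * (((((k : ℕ) : ℝ) + 1) * Real.pi / (2 * N) : ℝ) : ℂ))


lemma sign_iff (u v : ℝ) (hu : u ≠ 0) (hv : v ≠ 0)
    (h : Real.sign u = Real.sign v) : (0 < u ↔ 0 < v) := by
  rcases hu.lt_or_gt with h1 | h1 <;> rcases hv.lt_or_gt with h2 | h2
  · exact iff_of_false (by linarith) (by linarith)
  · exfalso; rw [Real.sign_of_neg h1, Real.sign_of_pos h2] at h; norm_num at h
  · exfalso; rw [Real.sign_of_pos h1, Real.sign_of_neg h2] at h; norm_num at h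
  · exact iff_of_true h1 h2

lemma sign_mul_iff (ρ u v : ℝ) (hρ : 0 < ρ) (hu : u ≠ 0) (hv : v ≠ 0)
    (h : Real.sign (ρ*u) = Real.sign (ρ*v)) : (0 < u ↔ 0 < v) := by
  have h1 : (0 < ρ*u ↔ 0 < ρ*v) :=
    sign_iff _ _ (mul_ne_zero hρ.ne' hu) (mul_ne_zero hρ.ne' hv) h
  constructor <;> intro hx
  · nlinarith [h1.mp (mul_pos hρ hx)]
  · nlinarith [h1.mpr (mul_pos hρ hx)]

lemma sin_lb {t m : ℝ} (ht0 : 0 ≤ t) (ht : t ≤ Real.pi/2) (h1 : t ≤ m) (h2 : m ≤ Real.pi - t) :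
    Real.sin t ≤ Real.sin m := by
  have hπ := Real.pi_pos
  rcases le_or_gt m (Real.pi/2) with hm | hm
  · exact Real.strictMonoOn_sin.monotoneOn (Set.mem_Icc.mpr ⟨by linarith, ht⟩)
      (Set.mem_Icc.mpr ⟨by linarith, hm⟩) h1
  · rw [← Real.sin_pi_sub m]
    exact Real.strictMonoOn_sin.monotoneOn (Set.mem_Icc.mpr ⟨by linarith, ht⟩)
      (Set.mem_Icc.mpr ⟨by linarith, by linarith⟩) (by linarith)

lemma cos_sep_lt {δ a b : ℝ} (hδ0 : 0 < δ) (ha : 0 ≤ a) (hb : b ≤ Real.pi)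
    (hab : a < b) (hsep : δ ≤ b - a) :
    2 * Real.sin (δ/2)^2 ≤ Real.cos a - Real.cos b := by
  have hπ := Real.pi_pos
  have h1 : Real.cos a - Real.cos b = 2 * Real.sin ((a+b)/2) * Real.sin ((b-a)/2) := by
    rw [Real.cos_sub_cos, show (a-b)/2 = -((b-a)/2) by ring, Real.sin_neg]; ring
  have ht0 : 0 < (b-a)/2 := by linarith
  have htπ : (b-a)/2 ≤ Real.pi/2 := by linarith
  have hδ2 : δ/2 ≤ (b-a)/2 := by linarith
  have hs1 : Real.sin (δ/2) ≤ Real.sin ((b-a)/2) :=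
    Real.strictMonoOn_sin.monotoneOn (Set.mem_Icc.mpr ⟨by linarith, by linarith⟩)
      (Set.mem_Icc.mpr ⟨by linarith, htπ⟩) hδ2
  have hs2 : Real.sin ((b-a)/2) ≤ Real.sin ((a+b)/2) :=
    sin_lb ht0.le htπ (by linarith) (by linarith)
  have hsδ : 0 ≤ Real.sin (δ/2) :=
    Real.sin_nonneg_of_nonneg_of_le_pi (by linarith) (by linarith)
  nlinarith [hs1, hs2, hsδ]

lemma sign_cos_sin (ψ : ℝ) (hc : Real.cos ψ ≠ 0) (hs : Real.sin ψ ≠ 0) :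
    ((0 < Real.cos ψ) ↔ (⌊2*ψ/Real.pi⌋ % 4 = 0 ∨ ⌊2*ψ/Real.pi⌋ % 4 = 3)) ∧
    ((0 < Real.sin ψ) ↔ (⌊2*ψ/Real.pi⌋ % 4 = 0 ∨ ⌊2*ψ/Real.pi⌋ % 4 = 1)) := by
  have hπ := Real.pi_pos
  set n : ℤ := ⌊2*ψ/Real.pi⌋ with hn
  have h1 : (n:ℝ) ≤ 2*ψ/Real.pi := Int.floor_le _
  have h2 : 2*ψ/Real.pi < n+1 := Int.lt_floor_add_one _
  have hne : (n:ℝ) ≠ 2*ψ/Real.pi := by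
    intro h
    have hψ : 2*ψ = (n:ℝ) * Real.pi := by
      field_simp at h; linarith
    have h0 : Real.sin (2*ψ) = 0 := by rw [hψ]; exact Real.sin_int_mul_pi n
    rw [Real.sin_two_mul] at h0
    have := mul_ne_zero (mul_ne_zero (two_ne_zero (α := ℝ)) hs) hc
    exact this h0
  have h1' : (n:ℝ) * (Real.pi/2) < ψ := by
    have hlt : (n:ℝ) < 2*ψ/Real.pi := lt_of_le_of_ne h1 hne
    have := (lt_div_iff₀ hπ).mp hlt
    linarith
  have h2' : ψ < ((n:ℝ)+1) * (Real.pi/2) := by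
    have := (div_lt_iff₀ hπ).mp h2
    linarith
  obtain ⟨qq, r, hr0, hr4, hnqr⟩ : ∃ qq r : ℤ, 0 ≤ r ∧ r < 4 ∧ n = 4*qq + r :=
    ⟨n/4, n%4, Int.emod_nonneg _ (by norm_num), Int.emod_lt_of_pos _ (by norm_num), by omega⟩
  set ψ' := ψ - (qq:ℝ)*(2*Real.pi) with hψ'
  have hcψ : Real.cos ψ' = Real.cos ψ := Real.cos_sub_int_mul_two_pi ψ qq
  have hsψ : Real.sin ψ' = Real.sin ψ := by
    rw [show ψ' = ψ + ((-qq : ℤ):ℝ)*(2*Real.pi) by push_cast; ring]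
    exact Real.sin_add_int_mul_two_pi ψ (-qq)
  have hcast : (n:ℝ) = 4*(qq:ℝ) + (r:ℝ) := by exact_mod_cast congrArg (Int.cast : ℤ → ℝ) hnqr
  have hlo : (r:ℝ)*(Real.pi/2) < ψ' := by rw [hψ']; nlinarith [h1']
  have hhi : ψ' < ((r:ℝ)+1)*(Real.pi/2) := by rw [hψ']; nlinarith [h2']
  have hmod : n % 4 = r := by omega
  rw [← hcψ, ← hsψ, hmod]
  interval_cases r
  · norm_num at hlo hhi
    have hc' : 0 < Real.cos ψ' := Real.cos_pos_of_mem_Ioo ⟨by linarith, hhi⟩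
    have hs' : 0 < Real.sin ψ' := Real.sin_pos_of_pos_of_lt_pi hlo (by linarith)
    constructor
    · exact iff_of_true hc' (by norm_num)
    · exact iff_of_true hs' (by norm_num)
  · norm_num at hlo hhi
    have hc' : Real.cos ψ' < 0 := Real.cos_neg_of_pi_div_two_lt_of_lt hlo (by linarith)
    have hs' : 0 < Real.sin ψ' := Real.sin_pos_of_pos_of_lt_pi (by linarith) (by linarith)
    constructor
    · exact iff_of_false (by linarith) (by norm_num)
    · exact iff_of_true hs' (by norm_num)
  · norm_num at hlo hhi
    have hc' : Real.cos ψ' < 0 := Real.cos_neg_of_pi_div_two_lt_of_lt (by linarith) (by linarith)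
    have hsp : 0 < Real.sin (ψ' - Real.pi) :=
      Real.sin_pos_of_pos_of_lt_pi (by linarith) (by linarith)
    have hs' : Real.sin ψ' < 0 := by
      have := Real.sin_sub_pi ψ'
      linarith
    constructor
    · exact iff_of_false (by linarith) (by norm_num)
    · exact iff_of_false (by linarith) (by norm_num)
  · norm_num at hlo hhi
    have hc' : 0 < Real.cos ψ' := by
      rw [← Real.cos_sub_two_pi ψ']
      exact Real.cos_pos_of_mem_Ioo ⟨by linarith, by linarith⟩
    have hsp : 0 < Real.sin (ψ' - Real.pi) :=
      Real.sin_pos_of_pos_of_lt_pi (by linarith) (by linarith)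
    have hs' : Real.sin ψ' < 0 := by
      have := Real.sin_sub_pi ψ'
      linarith
    constructor
    · exact iff_of_true hc' (by norm_num)
    · exact iff_of_false (by linarith) (by norm_num)

lemma quad_eq {α β : ℝ} (hβα : β < α) (hle : α - β ≤ Real.pi)
    (hca : Real.cos α ≠ 0) (hsa : Real.sin α ≠ 0)
    (hcb : Real.cos β ≠ 0) (hsb : Real.sin β ≠ 0)
    (hc : (0 < Real.cos α ↔ 0 < Real.cos β)) (hs : (0 < Real.sin α ↔ 0 < Real.sin β)) :
    ⌊2*α/Real.pi⌋ = ⌊2*β/Real.pi⌋ := by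
  have hπ := Real.pi_pos
  obtain ⟨hca', hsa'⟩ := sign_cos_sin α hca hsa
  obtain ⟨hcb', hsb'⟩ := sign_cos_sin β hcb hsb
  have hmono : ⌊2*β/Real.pi⌋ ≤ ⌊2*α/Real.pi⌋ :=
    Int.floor_le_floor (by gcongr <;> linarith)
  have hub : ⌊2*α/Real.pi⌋ ≤ ⌊2*β/Real.pi⌋ + 2 := by
    have hd : 2*α/Real.pi ≤ 2*β/Real.pi + 2 := by
      rw [div_add' _ _ _ hπ.ne', div_le_div_iff₀ hπ hπ]
      nlinarith
    calc ⌊2*α/Real.pi⌋ ≤ ⌊2*β/Real.pi + ((2:ℤ):ℝ)⌋ := Int.floor_le_floor (by push_cast; linarith)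
      _ = ⌊2*β/Real.pi⌋ + 2 := Int.floor_add_intCast _ _
  have h1 := hca'.symm.trans (hc.trans hcb')
  have h2 := hsa'.symm.trans (hs.trans hsb')
  omega

lemma key (N : ℕ) (hN : 1 ≤ N) (a b : ℝ) (hab : 1/(N:ℝ) ≤ a - b)
    (h : ∀ j : Fin N, ⌊a + (((j:ℕ):ℝ)+1)/(N:ℝ)⌋ = ⌊b + (((j:ℕ):ℝ)+1)/(N:ℝ)⌋) : False := by
  have hN0 : (0:ℝ) < N := by exact_mod_cast hN
  have mono : ∀ j : ℕ, j < N → ⌊b + ((j:ℝ)+1)/(N:ℝ)⌋ ≤ ⌊b + 1/(N:ℝ)⌋ := by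
    intro j
    induction j with
    | zero => intro _; norm_num
    | succ i ih =>
      intro hj
      have hi : i < N := by omega
      have step : ⌊b + (((i:ℝ)+1)+1)/(N:ℝ)⌋ ≤ ⌊a + ((i:ℝ)+1)/(N:ℝ)⌋ := by
        apply Int.floor_le_floor
        have e : (((i:ℝ)+1)+1)/(N:ℝ) = ((i:ℝ)+1)/(N:ℝ) + 1/(N:ℝ) := by ring
        rw [e]; linarith
      have heq : ⌊a + ((i:ℝ)+1)/(N:ℝ)⌋ = ⌊b + ((i:ℝ)+1)/(N:ℝ)⌋ := by
        have := h ⟨i, hi⟩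
        simpa using this
      have cast1 : (((i+1:ℕ)):ℝ) = (i:ℝ)+1 := by push_cast; ring
      rw [cast1]
      calc ⌊b + (((i:ℝ)+1)+1)/(N:ℝ)⌋ ≤ ⌊a + ((i:ℝ)+1)/(N:ℝ)⌋ := step
        _ = ⌊b + ((i:ℝ)+1)/(N:ℝ)⌋ := heq
        _ ≤ ⌊b + 1/(N:ℝ)⌋ := ih hi
  have hcastN : ((N-1:ℕ):ℝ) + 1 = (N:ℝ) := by
    push_cast [Nat.cast_sub hN]; ring
  have h1 : ⌊b + 1⌋ ≤ ⌊b + 1/(N:ℝ)⌋ := by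
    have := mono (N-1) (by omega)
    rw [hcastN, div_self hN0.ne'] at this
    exact this
  have h2 : (⌊b⌋:ℝ) + 1 ≤ b + 1/(N:ℝ) := by
    rw [Int.floor_add_one] at h1
    have := Int.floor_le (b + 1/(N:ℝ))
    have hle' : ((⌊b⌋ + 1 : ℤ):ℝ) ≤ (⌊b + 1/(N:ℝ)⌋ : ℝ) := by exact_mod_cast h1
    push_cast at hle'
    linarith
  have h3 : ⌊a + 1⌋ = ⌊b + 1⌋ := by
    have := h ⟨N-1, by omega⟩
    simp only [] at this
    rw [show (((⟨N-1, by omega⟩ : Fin N) : ℕ):ℝ) = ((N-1:ℕ):ℝ) from rfl, hcastN,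
      div_self hN0.ne'] at this
    exact this
  have h4 : ⌊a⌋ = ⌊b⌋ := by
    rw [Int.floor_add_one, Int.floor_add_one] at h3; omega
  have h5 := Int.lt_floor_add_one a
  rw [h4] at h5
  linarith

lemma prod_form (s t ρ : ℝ) :
    Complex.exp (Complex.I * (s:ℂ)) * ((ρ:ℂ) * Complex.exp (Complex.I * (t:ℂ))) =
      (ρ:ℂ) * Complex.exp (((s + t : ℝ):ℂ) * Complex.I) := by
  have h : Complex.I * (s:ℂ) + Complex.I * (t:ℂ) = ((s+t:ℝ):ℂ) * Complex.I := by
    push_cast; ring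
  calc Complex.exp (Complex.I * (s:ℂ)) * ((ρ:ℂ) * Complex.exp (Complex.I * (t:ℂ)))
      = (ρ:ℂ) * (Complex.exp (Complex.I * (s:ℂ)) * Complex.exp (Complex.I * (t:ℂ))) := by ring
    _ = (ρ:ℂ) * Complex.exp (Complex.I * (s:ℂ) + Complex.I * (t:ℂ)) := by
        rw [Complex.exp_add]
    _ = _ := by rw [h]

lemma aux_contra (M N : ℕ) (hM : 2 ≤ M) (hN : 1 ≤ N)
    (cu cv : ℝ)
    (hgap : 1/(N:ℝ) ≤ 2*((M:ℝ)-1)*(cu - cv))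
    (hwrap : ((M:ℝ)-1)*(cu - cv) ≤ 1)
    (hchu hchv : Fin M → ℂ)
    (hhu : ∀ m : Fin M, hchu m = Complex.exp (Complex.I * ((Real.pi * ((m:ℕ):ℝ) * cu : ℝ):ℂ)))
    (hhv : ∀ m : Fin M, hchv m = Complex.exp (Complex.I * ((Real.pi * ((m:ℕ):ℝ) * cv : ℝ):ℂ)))
    (x : Fin N → ℂ) (hx : IsUniformPhasePilot N x)
    (hoff : ∀ (m : Fin M) (k : Fin N), offAxis (hchu m * x k) ∧ offAxis (hchv m * x k))
    (hq : ∀ (m : Fin M) (k : Fin N), q (hchu m * x k) = q (hchv m * x k)) : False := by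
  obtain ⟨r, hr, hxk⟩ := hx
  have hπ := Real.pi_pos
  have hN0 : (0:ℝ) < N := by exact_mod_cast hN
  have hinv : (0:ℝ) < 1/(N:ℝ) := by positivity
  have hposc : 0 < ((M:ℝ)-1) * (cu - cv) := by nlinarith
  set m0 : Fin M := ⟨M-1, by omega⟩ with hm0
  have hm0c : ((m0:ℕ):ℝ) = (M:ℝ) - 1 := by
    show ((M-1:ℕ):ℝ) = (M:ℝ) - 1
    push_cast [Nat.cast_sub (by omega : 1 ≤ M)]; ring
  refine key N hN (2*((M:ℝ)-1)*cu) (2*((M:ℝ)-1)*cv) ?_ ?_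
  · have e : 2*((M:ℝ)-1)*cu - 2*((M:ℝ)-1)*cv = 2*((M:ℝ)-1)*(cu-cv) := by ring
    linarith
  · intro k
    set θ : ℝ := (((k:ℕ):ℝ)+1) * Real.pi / (2*(N:ℝ)) with hθ
    set ψu : ℝ := Real.pi * ((M:ℝ)-1) * cu + θ with hψu
    set ψv : ℝ := Real.pi * ((M:ℝ)-1) * cv + θ with hψv
    have hzu : hchu m0 * x k = ((r k : ℝ):ℂ) * Complex.exp ((ψu:ℂ) * Complex.I) := by
      rw [hhu m0, hxk k, hm0c]
      exact prod_form _ _ _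
    have hzv : hchv m0 * x k = ((r k : ℝ):ℂ) * Complex.exp ((ψv:ℂ) * Complex.I) := by
      rw [hhv m0, hxk k, hm0c]
      exact prod_form _ _ _
    have hreu : (hchu m0 * x k).re = r k * Real.cos ψu := by
      rw [hzu, Complex.re_ofReal_mul, Complex.exp_ofReal_mul_I_re]
    have himu : (hchu m0 * x k).im = r k * Real.sin ψu := by
      rw [hzu, Complex.im_ofReal_mul, Complex.exp_ofReal_mul_I_im]
    have hrev : (hchv m0 * x k).re = r k * Real.cos ψv := by
      rw [hzv, Complex.re_ofReal_mul, Complex.exp_ofReal_mul_I_re]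
    have himv : (hchv m0 * x k).im = r k * Real.sin ψv := by
      rw [hzv, Complex.im_ofReal_mul, Complex.exp_ofReal_mul_I_im]
    obtain ⟨⟨hou1, hou2⟩, ⟨hov1, hov2⟩⟩ := hoff m0 k
    rw [hreu] at hou1; rw [himu] at hou2; rw [hrev] at hov1; rw [himv] at hov2
    have hcu : Real.cos ψu ≠ 0 := fun h0 => hou1 (by rw [h0, mul_zero])
    have hsu : Real.sin ψu ≠ 0 := fun h0 => hou2 (by rw [h0, mul_zero])
    have hcv : Real.cos ψv ≠ 0 := fun h0 => hov1 (by rw [h0, mul_zero])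
    have hsv : Real.sin ψv ≠ 0 := fun h0 => hov2 (by rw [h0, mul_zero])
    have hq' := hq m0 k
    simp only [q, Prod.mk.injEq] at hq'
    obtain ⟨hq1, hq2⟩ := hq'
    rw [hreu, hrev] at hq1
    rw [himu, himv] at hq2
    have hiffc : (0 < Real.cos ψu ↔ 0 < Real.cos ψv) :=
      sign_mul_iff _ _ _ (hr k) hcu hcv hq1
    have hiffs : (0 < Real.sin ψu ↔ 0 < Real.sin ψv) :=
      sign_mul_iff _ _ _ (hr k) hsu hsv hq2
    have hβα : ψv < ψu := by
      rw [hψu, hψv]; nlinarith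
    have hle : ψu - ψv ≤ Real.pi := by
      rw [hψu, hψv]; nlinarith
    have hfl := quad_eq hβα hle hcu hsu hcv hsv hiffc hiffs
    have e1 : 2*ψu/Real.pi = 2*((M:ℝ)-1)*cu + (((k:ℕ):ℝ)+1)/(N:ℝ) := by
      rw [hψu, hθ]; field_simp
    have e2 : 2*ψv/Real.pi = 2*((M:ℝ)-1)*cv + (((k:ℕ):ℝ)+1)/(N:ℝ) := by
      rw [hψv, hθ]; field_simp
    rw [← e1, ← e2]
    exact hfl

/-- Corollary 1 (pairwise form, no phase wrap-around): for single-path ULA channels with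
angles of arrival separated by at least `δφ`, a uniform-phase pilot of length
`N ≥ 1/(4·(M−1)·sin²(δφ/2))` yields different quantized measurement matrices. -/
theorem corollary1_pairwise (M N : ℕ) (hM : 2 ≤ M) (hN : 1 ≤ N)
    (δφ : ℝ) (hδ0 : 0 < δφ) (hδπ : δφ ≤ Real.pi)
    (φu φv : ℝ) (hu : φu ∈ Set.Icc 0 Real.pi) (hv : φv ∈ Set.Icc 0 Real.pi)
    (hsep : δφ ≤ |φu - φv|)
    (hnowrap : ((M : ℝ) - 1) * |Real.cos φu - Real.cos φv| ≤ 1)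
    (hchu hchv : Fin M → ℂ)
    (hhu : ∀ m : Fin M,
      hchu m = Complex.exp (Complex.I * ((Real.pi * ((m : ℕ) : ℝ) * Real.cos φu : ℝ) : ℂ)))
    (hhv : ∀ m : Fin M,
      hchv m = Complex.exp (Complex.I * ((Real.pi * ((m : ℕ) : ℝ) * Real.cos φv : ℝ) : ℂ)))
    (x : Fin N → ℂ) (hx : IsUniformPhasePilot N x)
    (hNpilot : 1 / (4 * ((M : ℝ) - 1) * Real.sin (δφ / 2) ^ 2) ≤ (N : ℝ))
    (hoff : ∀ (m : Fin M) (k : Fin N), offAxis (hchu m * x k) ∧ offAxis (hchv m * x k)) :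
    ∃ (m : Fin M) (k : Fin N), q (hchu m * x k) ≠ q (hchv m * x k) := by
  by_contra hcon
  push_neg at hcon
  have hπ := Real.pi_pos
  obtain ⟨hu0, hu1⟩ := hu
  obtain ⟨hv0, hv1⟩ := hv
  have hN0 : (0:ℝ) < N := by exact_mod_cast hN
  have hM1 : (1:ℝ) ≤ (M:ℝ) - 1 := by
    have : (2:ℝ) ≤ (M:ℝ) := by exact_mod_cast hM
    linarith
  have hs0 : 0 < Real.sin (δφ/2) :=
    Real.sin_pos_of_pos_of_lt_pi (by linarith) (by linarith)
  have hden : (0:ℝ) < 4 * ((M:ℝ)-1) * Real.sin (δφ/2)^2 := by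
    have h2 : (0:ℝ) < Real.sin (δφ/2)^2 := pow_pos hs0 2
    nlinarith
  have hNineq : 1/(N:ℝ) ≤ 4 * ((M:ℝ)-1) * Real.sin (δφ/2)^2 := by
    rw [div_le_iff₀ hden] at hNpilot
    rw [div_le_iff₀ hN0]
    nlinarith
  -- cosine separation
  have habs : 2 * Real.sin (δφ/2)^2 ≤ |Real.cos φu - Real.cos φv| := by
    rcases lt_or_ge φu φv with hor | hor
    · have hs' : δφ ≤ φv - φu := by
        rw [abs_sub_comm, abs_of_nonneg (by linarith)] at hsep
        exact hsep
      have := cos_sep_lt hδ0 hu0 hv1 hor hs'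
      exact this.trans (le_abs_self _)
    · have hne : φv < φu := by
        rcases lt_or_eq_of_le hor with h | h
        · exact h
        · exfalso; rw [h, sub_self, abs_zero] at hsep; linarith
      have hs' : δφ ≤ φu - φv := by
        rw [abs_of_nonneg (by linarith)] at hsep
        exact hsep
      have := cos_sep_lt hδ0 hv0 hu1 hne hs'
      calc 2 * Real.sin (δφ/2)^2 ≤ Real.cos φv - Real.cos φu := this
        _ ≤ |Real.cos φu - Real.cos φv| := by
            rw [abs_sub_comm]; exact le_abs_self _
  have hspos : 0 < Real.sin (δφ/2)^2 := pow_pos hs0 2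
  rcases lt_trichotomy (Real.cos φv) (Real.cos φu) with hlt | heq | hgt
  · have hc' : |Real.cos φu - Real.cos φv| = Real.cos φu - Real.cos φv :=
      abs_of_pos (by linarith)
    refine aux_contra M N hM hN (Real.cos φu) (Real.cos φv) ?_ ?_ hchu hchv hhu hhv x hx hoff hcon
    · rw [hc'] at habs
      nlinarith
    · rw [hc'] at hnowrap
      exact hnowrap
  · rw [heq, sub_self, abs_zero] at habs
    linarith
  · have hc' : |Real.cos φu - Real.cos φv| = Real.cos φv - Real.cos φu := by
      rw [abs_sub_comm]; exact abs_of_pos (by linarith)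
    refine aux_contra M N hM hN (Real.cos φv) (Real.cos φu) ?_ ?_ hchv hchu hhv hhu x hx
      (fun m k => (hoff m k).symm) (fun m k => (hcon m k).symm)
    · rw [hc'] at habs
      nlinarith
    · rw [hc'] at hnowrap
      exact hnowrap
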